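/- The GLLOWJFA over {a,b} with single state q0 (both start and accepting) and the single rule (q0,ab,q0) accepts exactly the Dyck language D over {a,b} (words with equal numbers of a's and b's such that every prefix has at least as many a's as b's). -/
import Mathlib


open List

/-- Two-letter alphabet. -/
inductive AB : Type | a | b
  deriving DecidableEq, Repr

/-- Three-letter alphabet. -/
inductive ABC : Type | a | b | c
  deriving DecidableEq, Repr

instance : Fintype AB := ⟨⟨{AB.a, AB.b}, by decide⟩, by intro x; cases x <;> decide⟩
instance : Fintype ABC := ⟨⟨{ABC.a, ABC.b, ABC.c}, by decide⟩, by intro x; cases x <;> decide⟩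

/-- The Dyck language over the two designated letters `a` (open) and `b` (close):
balanced words using only `a` and `b`. -/
def Dyck {α : Type} [DecidableEq α] (a b : α) : Set (List α) :=
  {w | (∀ x ∈ w, x = a ∨ x = b) ∧ w.count a = w.count b ∧
       ∀ u, u <+: w → u.count b ≤ u.count a}

/-- `u` contains no word from `S` as a subword (infix). -/
def NoSub {α : Type} (S : Set (List α)) (u : List α) : Prop :=
  ¬ ∃ w ∈ S, w <:+: u

/-! ### Right one-way jumping finite automata -/

structure ROWJFA (α σ : Type) where
  start : σ
  accept : Set σ
  rules : Set (σ × α × σ)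
  det : ∀ p a q q', (p, a, q) ∈ rules → (p, a, q') ∈ rules → q = q'

namespace ROWJFA
variable {α σ : Type}

def sig (A : ROWJFA α σ) (p : σ) : Set α := {a | ∃ q, (p, a, q) ∈ A.rules}

/-- `p x a y ↷ q y x` when `(p,a,q) ∈ R` and `x ∈ (Σ∖Σ_p)*`. -/
inductive Step (A : ROWJFA α σ) : σ × List α → σ × List α → Prop
  | jump {p q : σ} {a : α} (x y : List α) :
      (p, a, q) ∈ A.rules → (∀ b ∈ x, b ∉ A.sig p) →
      Step A (p, x ++ a :: y) (q, y ++ x)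

def language (A : ROWJFA α σ) : Set (List α) :=
  {w | ∃ qf ∈ A.accept, Relation.ReflTransGen (Step A) (A.start, w) (qf, [])}

end ROWJFA

def ROWJ {α : Type} (L : Set (List α)) : Prop :=
  ∃ (σ : Type) (_ : Finite σ) (A : ROWJFA α σ), A.language = L

/-! ### Left one-way jumping finite automata -/

structure LOWJFA (α σ : Type) where
  start : σ
  accept : Set σ
  /-- A rule `(q, a, p)` means: from state `p`, delete `a`, move to state `q`. -/
  rules : Set (σ × α × σ)
  det : ∀ p a q q', (q, a, p) ∈ rules → (q', a, p) ∈ rules → q = q'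

namespace LOWJFA
variable {α σ : Type}

def sig (A : LOWJFA α σ) (p : σ) : Set α := {a | ∃ q, (q, a, p) ∈ A.rules}

/-- `x y q ↶ y a x p` when `(q,a,p) ∈ R` and `x ∈ (Σ∖Σ_p)*`;
configurations are in `Σ* Q`. -/
inductive Step (A : LOWJFA α σ) : List α × σ → List α × σ → Prop
  | jump {p q : σ} {a : α} (x y : List α) :
      (q, a, p) ∈ A.rules → (∀ b ∈ x, b ∉ A.sig p) →
      Step A (y ++ a :: x, p) (x ++ y, q)

def language (A : LOWJFA α σ) : Set (List α) :=
  {w | ∃ qf ∈ A.accept, Relation.ReflTransGen (Step A) (w, A.start) ([], qf)}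

end LOWJFA

def LOWJ {α : Type} (L : Set (List α)) : Prop :=
  ∃ (σ : Type) (_ : Finite σ) (A : LOWJFA α σ), A.language = L

/-! ### Generalized right linear one-way jumping finite automata -/

structure GRLOWJFA (α σ : Type) where
  start : σ
  accept : Set σ
  rules : Set (σ × List α × σ)
  finite : rules.Finite
  ne : ∀ r ∈ rules, r.2.1 ≠ ([] : List α)
  det : ∀ p w q q', (p, w, q) ∈ rules → (p, w, q') ∈ rules → q = q'

namespace GRLOWJFA
variable {α σ : Type}

def sig (A : GRLOWJFA α σ) (p : σ) : Set (List α) := {w | ∃ q, (p, w, q) ∈ A.rules}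

/-- Configurations are triples `(t, p, v)` representing `t p v ∈ Σ* Q Σ*`. -/
inductive Step (A : GRLOWJFA α σ) :
    List α × σ × List α → List α × σ × List α → Prop
  /-- `t p u x v ↷ t u q v`. -/
  | rule {p q : σ} {x : List α} (t u v : List α) :
      (p, x, q) ∈ A.rules →
      NoSub (A.sig p) u →
      (¬ ∃ u₂ x₁ : List α, u₂ ≠ [] ∧ x₁ ≠ [] ∧ u₂ <:+ u ∧ x₁ <+: x ∧ u₂ ++ x₁ = x) →
      Step A (t, p, u ++ x ++ v) (t ++ u, q, v)
  /-- `x p y ↷ p x y`. -/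
  | ret {p : σ} (x y : List α) :
      x ≠ [] → NoSub (A.sig p) y →
      Step A (x, p, y) ([], p, x ++ y)

def language (A : GRLOWJFA α σ) : Set (List α) :=
  {w | ∃ qf ∈ A.accept, Relation.ReflTransGen (Step A) ([], A.start, w) ([], qf, [])}

end GRLOWJFA

def GRLOWJ {α : Type} (L : Set (List α)) : Prop :=
  ∃ (σ : Type) (_ : Finite σ) (A : GRLOWJFA α σ), A.language = L

/-! ### Generalized left linear one-way jumping finite automata -/

structure GLLOWJFA (α σ : Type) where
  start : σ
  accept : Set σ
  /-- A rule `(q, w, p)` means: from state `p`, delete `w`, move to state `q`. -/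
  rules : Set (σ × List α × σ)
  finite : rules.Finite
  ne : ∀ r ∈ rules, r.2.1 ≠ ([] : List α)
  det : ∀ p w q q', (q, w, p) ∈ rules → (q', w, p) ∈ rules → q = q'

namespace GLLOWJFA
variable {α σ : Type}

def sig (A : GLLOWJFA α σ) (p : σ) : Set (List α) := {w | ∃ q, (q, w, p) ∈ A.rules}

/-- Configurations are triples `(v, p, t)` representing `v p t ∈ Σ* Q Σ*`. -/
inductive Step (A : GLLOWJFA α σ) :
    List α × σ × List α → List α × σ × List α → Prop
  /-- `v q u t ↶ v x u p t`. -/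
  | rule {p q : σ} {x : List α} (t u v : List α) :
      (q, x, p) ∈ A.rules →
      NoSub (A.sig p) u →
      (¬ ∃ x₂ u₁ : List α, x₂ ≠ [] ∧ u₁ ≠ [] ∧ x₂ <:+ x ∧ u₁ <+: u ∧ x₂ ++ u₁ = x) →
      Step A (v ++ x ++ u, p, t) (v, q, u ++ t)
  /-- `y x p ↶ y p x`. -/
  | ret {p : σ} (x y : List α) :
      x ≠ [] → NoSub (A.sig p) y →
      Step A (y, p, x) (y ++ x, p, [])

def language (A : GLLOWJFA α σ) : Set (List α) :=
  {w | ∃ qf ∈ A.accept, Relation.ReflTransGen (Step A) (w, A.start, []) ([], qf, [])}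

end GLLOWJFA

def GLLOWJ {α : Type} (L : Set (List α)) : Prop :=
  ∃ (σ : Type) (_ : Finite σ) (A : GLLOWJFA α σ), A.language = L

/-- The one-state GLLOWJFA of STATEMENT 4, with the single rule `(q0, ab, q0)`. -/
def A4 : GLLOWJFA AB Unit where
  start := ()
  accept := {()}
  rules := {((), [AB.a, AB.b], ())}
  finite := Set.finite_singleton _
  ne := by
    intro r hr
    simp only [Set.mem_singleton_iff] at hr
    subst hr; simp
  det := by intro p w q q' h h'; simp_all

namespace Stmt4

abbrev ab : List AB := [AB.a, AB.b]

lemma prefix_append_cases {α : Type} {u x y : List α} (h : u <+: x ++ y) :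
    u <+: x ∨ ∃ u', u = x ++ u' ∧ u' <+: y := by
  by_cases hl : u.length ≤ x.length
  · exact Or.inl (List.prefix_of_prefix_length_le h (List.prefix_append x y) hl)
  · have hx : x <+: u := List.prefix_of_prefix_length_le (List.prefix_append x y) h
      (by omega)
    obtain ⟨u', rfl⟩ := hx
    exact Or.inr ⟨u', rfl, (List.prefix_append_right_inj x).1 h⟩

lemma prefix_ab {u : List AB} (h : u <+: ab) : u = [] ∨ u = [AB.a] ∨ u = ab := by
  rcases h with ⟨s, hs⟩
  match u, hs with
  | [], _ => exact Or.inl rfl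
  | [z], hs =>
    simp only [List.cons_append, List.nil_append, List.cons.injEq] at hs
    exact Or.inr (Or.inl (by rw [hs.1]))
  | [z, w], hs =>
    simp only [List.cons_append, List.nil_append, List.cons.injEq] at hs
    obtain ⟨rfl, rfl, hs⟩ := hs
    have : s = [] := by simpa using congrArg List.length hs
    subst this
    exact Or.inr (Or.inr rfl)
  | z :: w :: v :: r, hs =>
    exfalso
    have := congrArg List.length hs
    simp only [List.length_append, List.length_cons, List.length_nil] at this
    omega

lemma dyck_insert {x y : List AB} (h : x ++ y ∈ Dyck AB.a AB.b) :
    x ++ ab ++ y ∈ Dyck AB.a AB.b := by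
  obtain ⟨h1, h2, h3⟩ := h
  refine ⟨fun z _ => by cases z <;> simp, ?_, ?_⟩
  · simp only [List.count_append] at h2 ⊢
    simp [ab]
    omega
  · intro u hu
    rw [List.append_assoc] at hu
    rcases prefix_append_cases hu with h' | ⟨u', rfl, hu'⟩
    · exact h3 u (h'.trans (List.prefix_append x y))
    · have hc := h3 x (List.prefix_append x y)
      rcases prefix_append_cases hu' with h' | ⟨u'', rfl, hu''⟩
      · rcases prefix_ab h' with rfl | rfl | rfl <;>
          simp only [List.count_append] <;> simp [ab] <;> omega
      · have hp : x ++ u'' <+: x ++ y := (List.prefix_append_right_inj x).2 hu''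
        have := h3 (x ++ u'') hp
        simp only [List.count_append] at this ⊢
        simp [ab] at this ⊢
        omega

lemma dyck_delete {x y : List AB} (h : x ++ ab ++ y ∈ Dyck AB.a AB.b) :
    x ++ y ∈ Dyck AB.a AB.b := by
  obtain ⟨h1, h2, h3⟩ := h
  refine ⟨fun z _ => by cases z <;> simp, ?_, ?_⟩
  · simp only [List.count_append] at h2 ⊢
    simp [ab] at h2
    omega
  · intro u hu
    rcases prefix_append_cases hu with h' | ⟨u', rfl, hu'⟩
    · exact h3 u (h'.trans ((List.prefix_append x (ab ++ y)).trans
        (by rw [List.append_assoc])))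
    · have hp : x ++ ab ++ u' <+: x ++ ab ++ y :=
        (List.prefix_append_right_inj (x ++ ab)).2 hu'
      have := h3 (x ++ ab ++ u') hp
      simp only [List.count_append] at this ⊢
      simp [ab] at this ⊢
      omega

lemma last_ab (w : List AB) (h : ab <:+: w) :
    ∃ x u, w = x ++ ab ++ u ∧ ¬ ab <:+: u := by
  obtain ⟨x, u, hw⟩ := h
  by_cases hu : ab <:+: u
  · obtain ⟨x', u', hu', hnu⟩ := last_ab u hu
    refine ⟨x ++ ab ++ x', u', ?_, hnu⟩
    rw [← hw, hu']; simp [List.append_assoc]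
  · exact ⟨x, u, hw.symm, hu⟩
termination_by w.length
decreasing_by rw [← hw]; simp [ab]; omega

lemma noab_shape : ∀ w : List AB, ¬ (ab <:+: w) →
    ∃ m n, w = List.replicate m AB.b ++ List.replicate n AB.a := by
  intro w
  induction w with
  | nil => exact fun _ => ⟨0, 0, rfl⟩
  | cons c w ih =>
    intro h
    have hw : ¬ (ab <:+: w) := fun hi => h (List.infix_cons hi)
    obtain ⟨m, n, rfl⟩ := ih hw
    cases c with
    | b => exact ⟨m + 1, n, by simp [List.replicate_succ]⟩
    | a =>
      cases m with
      | zero => exact ⟨0, n + 1, by simp [List.replicate_succ]⟩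
      | succ m' =>
        exfalso
        exact h ⟨[], List.replicate m' AB.b ++ List.replicate n AB.a,
          by simp [ab, List.replicate_succ]⟩

lemma dyck_noab {w : List AB} (h : w ∈ Dyck AB.a AB.b) (hn : ¬ (ab <:+: w)) :
    w = [] := by
  obtain ⟨m, n, rfl⟩ := noab_shape w hn
  obtain ⟨_, h2, h3⟩ := h
  have hm := h3 (List.replicate m AB.b) (List.prefix_append _ _)
  simp [List.count_replicate, List.count_append] at hm h2
  have hm0 : m = 0 := by omega
  have hn0 : n = 0 := by omega
  simp [hm0, hn0]

lemma sig_eq : A4.sig () = {ab} := by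
  ext w
  simp [GLLOWJFA.sig, A4, ab]

lemma nosub_iff {u : List AB} : NoSub (A4.sig ()) u ↔ ¬ (ab <:+: u) := by
  unfold NoSub
  rw [sig_eq]
  simp

lemma step_rule {v u t : List AB} (hu : ¬ (ab <:+: u)) :
    GLLOWJFA.Step A4 (v ++ ab ++ u, (), t) (v, (), u ++ t) := by
  refine GLLOWJFA.Step.rule t u v ?_ (nosub_iff.2 hu) ?_
  · simp [A4]
  · rintro ⟨x₂, u₁, hx₂, hu₁, hsuf, _, heq⟩
    have hlen : x₂.length + u₁.length = 2 := by
      have := congrArg List.length heq; simpa [ab] using this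
    have h1 : x₂.length = 1 := by
      have := List.length_pos_iff.2 hx₂
      have := List.length_pos_iff.2 hu₁
      omega
    obtain ⟨c, rfl⟩ := List.length_eq_one_iff.1 h1
    have hc : c = AB.a := by
      simp only [ab, List.cons_append, List.nil_append, List.cons.injEq] at heq
      exact heq.1
    subst hc
    exact absurd hsuf (by decide)

lemma step_ret {v t : List AB} (ht : t ≠ []) (hv : ¬ (ab <:+: v)) :
    GLLOWJFA.Step A4 (v, (), t) (v ++ t, (), []) :=
  GLLOWJFA.Step.ret t v ht (nosub_iff.2 hv)

lemma main : ∀ N (v t : List AB),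
    2 * (v.length + t.length) + (if t = [] then 0 else 1) ≤ N →
    v ++ t ∈ Dyck AB.a AB.b →
    Relation.ReflTransGen (GLLOWJFA.Step A4) (v, (), t) ([], (), []) := by
  intro N
  induction N with
  | zero =>
    intro v t hm _
    rcases v with - | ⟨c, v⟩
    · rcases t with - | ⟨c, t⟩
      · exact Relation.ReflTransGen.refl
      · exfalso
        rw [if_neg (by simp)] at hm
        simp only [List.length_nil, List.length_cons] at hm
        omega
    · exfalso
      have hb : (if t = [] then 0 else 1) ≥ 0 := by omega
      simp only [List.length_cons] at hm
      split at hm <;> omega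
  | succ N ih =>
    intro v t hm hd
    by_cases hab : ab <:+: v
    · obtain ⟨x, u, rfl, hu⟩ := last_ab v hab
      refine Relation.ReflTransGen.head (step_rule hu) ?_
      apply ih
      · have b1 : (if u ++ t = [] then 0 else 1) ≤ 1 := by split <;> omega
        have b2 : (0:ℕ) ≤ (if t = [] then 0 else 1) := by omega
        simp only [List.length_append] at hm ⊢
        simp [ab] at hm
        omega
      · have hre : (x ++ ab ++ u) ++ t = x ++ ab ++ (u ++ t) := by
          simp [List.append_assoc]
        rw [hre] at hd
        have := dyck_delete hd
        simpa [List.append_assoc] using this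
    · by_cases ht : t = []
      · subst ht
        have hv : v = [] := dyck_noab (by simpa using hd) hab
        subst hv
        exact Relation.ReflTransGen.refl
      · refine Relation.ReflTransGen.head (step_ret ht hab) ?_
        apply ih
        · rw [if_neg ht] at hm
          simp only [List.length_append, List.length_nil]
          split
          · omega
          · rename_i hfoo; exact absurd (by trivial) hfoo
        · simpa using hd

lemma dyck_nil : ([] : List AB) ∈ Dyck AB.a AB.b := by
  refine ⟨by simp, by simp, ?_⟩
  intro u hu
  rw [List.prefix_nil.1 hu]
  simp

lemma step_sound {c c' : List AB × Unit × List AB} (h : GLLOWJFA.Step A4 c c')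
    (hd : c'.1 ++ c'.2.2 ∈ Dyck AB.a AB.b) : c.1 ++ c.2.2 ∈ Dyck AB.a AB.b := by
  cases h with
  | @rule p q x t u v hr hns hno =>
    have hx : x = ab := by
      simpa [A4, ab] using hr
    subst hx
    have := dyck_insert (x := v) (y := u ++ t) hd
    simpa [List.append_assoc] using this
  | ret x y hx hns =>
    simpa using hd

lemma sound {c : List AB × Unit × List AB}
    (h : Relation.ReflTransGen (GLLOWJFA.Step A4) c ([], (), [])) :
    c.1 ++ c.2.2 ∈ Dyck AB.a AB.b := by
  induction h using Relation.ReflTransGen.head_induction_on with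
  | refl => exact dyck_nil
  | head hstep _ ih => exact step_sound hstep ih

end Stmt4

theorem stmt_4 : A4.language = Dyck AB.a AB.b := by
  ext w
  constructor
  · rintro ⟨qf, -, h⟩
    obtain ⟨⟩ := qf
    simpa using Stmt4.sound h
  · intro hw
    refine ⟨(), Set.mem_singleton _, ?_⟩
    exact Stmt4.main (2 * w.length) w [] (by simp) (by simpa using hw)
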